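/- Let $G$ be a residually finite group and let $\gamma \in G$ be an element such that the cyclic subgroup $\langle\gamma\rangle$ generated by $\gamma$ is a maximal abelian subgroup of $G$ (i.e., every abelian subgroup of $G$ containing $\langle\gamma\rangle$ equals $\langle\gamma\rangle$). Let $S \subseteq G$ be a finite set disjoint from $\langle\gamma\rangle$. Then there exists a subgroup $H \subseteq G$ of finite index such that $\gamma \in H$ and $S \cap H = \emptyset$. -/
import Mathlib


/-- A group is residually finite if every non-identity element survives in some
homomorphism to a finite group. -/
def ResiduallyFinite (G : Type*) [Group G] : Prop :=
  ∀ g : G, g ≠ 1 → ∃ (Q : Type) (_ : Group Q) (_ : Finite Q) (f : G →* Q), f g ≠ 1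

/-- **Long's separability theorem.** If `G` is residually finite, `γ` generates a
maximal abelian subgroup, and `S` is a finite set disjoint from `⟨γ⟩`, then there is
a finite index subgroup `H` containing `γ` and disjoint from `S`. -/
theorem long_separability {G : Type*} [Group G] (hG : ResiduallyFinite G) (γ : G)
    (hmax : ∀ A : Subgroup G, (∀ a ∈ A, ∀ b ∈ A, a * b = b * a) →
      Subgroup.zpowers γ ≤ A → A = Subgroup.zpowers γ)
    (S : Finset G) (hS : Disjoint (S : Set G) (Subgroup.zpowers γ : Set G)) :
    ∃ H : Subgroup G, H.FiniteIndex ∧ γ ∈ H ∧ ∀ s ∈ S, s ∉ H := by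
  -- every element of S fails to commute with γ
  have hnc : ∀ s ∈ S, s * γ * s⁻¹ * γ⁻¹ ≠ 1 := by
    intro s hs hcomm
    have hcomm' : s * γ = γ * s := by
      have h := hcomm
      rwa [mul_inv_eq_one, mul_inv_eq_iff_eq_mul] at h
    -- then closure {γ, s} is abelian containing zpowers γ, so s ∈ zpowers γ
    set A := Subgroup.closure ({γ, s} : Set G) with hA
    have hk : ∀ x ∈ ({γ, s} : Set G), ∀ y ∈ ({γ, s} : Set G), x * y = y * x := by
      rintro x (rfl | rfl) y (rfl | rfl) <;> simp [hcomm']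
    have hsub : ({γ, s} : Set G) ⊆ ↑(Subgroup.centralizer {γ, s}) := by
      intro x hx
      rw [SetLike.mem_coe, Subgroup.mem_centralizer_iff]
      intro h hh
      exact hk h hh x hx
    have hle1 : A ≤ Subgroup.centralizer {γ, s} := (Subgroup.closure_le _).mpr hsub
    have hle2 := Subgroup.closure_le_centralizer_centralizer ({γ, s} : Set G)
    have hcommA : ∀ a ∈ A, ∀ b ∈ A, a * b = b * a := by
      intro a ha b hb
      exact Subgroup.mem_centralizer_iff.mp (hle2 hb) a (hle1 ha)
    have hle : Subgroup.zpowers γ ≤ A := by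
      rw [Subgroup.zpowers_le]
      exact Subgroup.subset_closure (by simp)
    have hsA : s ∈ A := Subgroup.subset_closure (by simp)
    rw [hmax A hcommA hle] at hsA
    exact Set.disjoint_left.mp hS hs hsA
  -- choose finite quotients detecting the commutators
  choose Q hQg hQf f hf using fun s (hs : s ∈ S) => hG _ (hnc s hs)
  -- the product homomorphism
  let P := ∀ s : S, Q s s.2
  letI : ∀ s : S, Group (Q s s.2) := fun s => hQg s s.2
  letI : ∀ s : S, Finite (Q s s.2) := fun s => hQf s s.2
  let F : G →* P := MonoidHom.mk' (fun g s => f s s.2 g) (by intro a b; funext s; exact map_mul _ _ _)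
  haveI : Finite P := by infer_instance
  refine ⟨(Subgroup.centralizer {F γ}).comap F, ?_, ?_, ?_⟩
  · haveI : Finite F.range := Subgroup.instFiniteSubtypeMem _
    haveI : F.ker.FiniteIndex := Subgroup.finiteIndex_ker F
    refine Subgroup.finiteIndex_of_le (H := F.ker) ?_
    intro x hx
    rw [Subgroup.mem_comap, MonoidHom.mem_ker.mp hx, Subgroup.mem_centralizer_singleton_iff]
    simp
  · simp [Subgroup.mem_comap, Subgroup.mem_centralizer_singleton_iff]
  · intro s hs hmem
    rw [Subgroup.mem_comap, Subgroup.mem_centralizer_singleton_iff] at hmem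
    apply hf s hs
    have h : f s hs s * f s hs γ = f s hs γ * f s hs s := congrFun hmem ⟨s, hs⟩
    simp only [map_mul, map_inv]
    rw [h]
    group
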